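/- (Local decomposition GL(n,ℝ) ≈ L₊↑ × pseudosymmetric matrices near the identity.) There exist open neighborhoods U, V, W of the identity matrix I in the space of real n×n matrices such that every matrix L ∈ W can be written as L = Λ · A with Λ ∈ U a Lorentz matrix (Λᵀ η Λ = η) and A ∈ V pseudosymmetric (η Aᵀ = A η), and this pair (Λ, A) ∈ U × V is unique. -/

import Mathlib

/-!
Write `σ X = η Xᵀ η`, an anti-involution of the matrix algebra. A matrix `Λ` is Lorentz iff
`σ Λ * Λ = 1` and `A` is pseudosymmetric iff `σ A = A`, so `L = Λ * A` forces
`σ L * L = A * A`. The squaring map has derivative `2 • id` at `1`, hence is a local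
homeomorphism there: `A` must be the local square root of `σ L * L`, which is `σ`-fixed because
`σ` commutes with squaring, and then `Λ = L * A⁻¹`.
-/

open Matrix

/-- The `n × n` Minkowski matrix `diag(1, -1, …, -1)`. -/
noncomputable def eta (n : ℕ) : Matrix (Fin n) (Fin n) ℝ :=
  Matrix.diagonal (fun i => if (i : ℕ) = 0 then (1 : ℝ) else -1)

section AntiInvolution

variable {M : Type*} [Monoid M] {σ : M → M}

theorem map_one_of_antiInvolution (hmul : ∀ x y, σ (x * y) = σ y * σ x)
    (hσ : Function.Involutive σ) : σ 1 = 1 :=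
  calc σ 1 = σ 1 * σ (σ 1) := by rw [hσ, mul_one]
    _ = σ (σ 1 * 1) := (hmul _ _).symm
    _ = 1 := by rw [mul_one, hσ]

theorem map_units_inv_of_antiInvolution (hmul : ∀ x y, σ (x * y) = σ y * σ x)
    (hσ : Function.Involutive σ) {u : Mˣ} (hu : σ u = u) : σ ↑u⁻¹ = ↑u⁻¹ :=
  Units.eq_inv_of_mul_eq_one_left <| by
    rw [← hu, ← hmul, Units.inv_mul, map_one_of_antiInvolution hmul hσ]

theorem antiInvolution_mul_self_of_mul (hmul : ∀ x y, σ (x * y) = σ y * σ x) {g a : M}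
    (hg : σ g * g = 1) (ha : σ a = a) : σ (g * a) * (g * a) = a * a := by
  rw [hmul, ha, mul_assoc, ← mul_assoc (σ g), hg, one_mul]

theorem antiInvolution_mul_self_mul_inv (hmul : ∀ x y, σ (x * y) = σ y * σ x)
    (hσ : Function.Involutive σ) {x : M} {u : Mˣ} (hu : σ u = u) (hx : σ x * x = u * u) :
    σ (x * ↑u⁻¹) * (x * ↑u⁻¹) = 1 := by
  rw [hmul, map_units_inv_of_antiInvolution hmul hσ hu, mul_assoc, ← mul_assoc (σ x), hx]
  simp [mul_assoc]

end AntiInvolution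

section LocalSquareRoot

variable {𝔸 : Type*} [NormedRing 𝔸] [NormedAlgebra ℝ 𝔸]

theorem hasStrictFDerivAt_mul_self_one :
    HasStrictFDerivAt (fun x : 𝔸 => x * x)
      ((ContinuousLinearEquiv.smulLeft (Units.mk0 (2 : ℝ) two_ne_zero) : 𝔸 ≃L[ℝ] 𝔸) :
        𝔸 →L[ℝ] 𝔸) 1 := by
  refine ((hasStrictFDerivAt_id (𝕜 := ℝ) (1 : 𝔸)).mul' (hasStrictFDerivAt_id 1)).congr_fderiv ?_
  ext x
  simp [two_smul]

variable [CompleteSpace 𝔸]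

variable (𝔸) in
noncomputable def mulSelfOpenPartialHomeomorph : OpenPartialHomeomorph 𝔸 𝔸 :=
  hasStrictFDerivAt_mul_self_one.toOpenPartialHomeomorph _

local notation "S" => mulSelfOpenPartialHomeomorph 𝔸

theorem mulSelfOpenPartialHomeomorph_apply (x : 𝔸) : S x = x * x := rfl

theorem one_mem_mulSelfOpenPartialHomeomorph_source : (1 : 𝔸) ∈ (S).source :=
  hasStrictFDerivAt_mul_self_one.mem_toOpenPartialHomeomorph_source

theorem one_mem_mulSelfOpenPartialHomeomorph_target : (1 : 𝔸) ∈ (S).target := by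
  simpa only [mulSelfOpenPartialHomeomorph_apply, one_mul] using
    (S).map_source one_mem_mulSelfOpenPartialHomeomorph_source

theorem mulSelfOpenPartialHomeomorph_symm_one : (S).symm 1 = 1 := by
  simpa only [mulSelfOpenPartialHomeomorph_apply, one_mul] using
    (S).left_inv one_mem_mulSelfOpenPartialHomeomorph_source

theorem eq_of_mul_self_eq_of_mem_source {x y : 𝔸} (hx : x ∈ (S).source) (hy : y ∈ (S).source)
    (h : x * x = y * y) : x = y :=
  (S).injOn hx hy h

theorem exists_isOpen_unique_antiInvolution_decomposition {σ : 𝔸 → 𝔸} (hσc : Continuous σ)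
    (hmul : ∀ x y, σ (x * y) = σ y * σ x) (hσ : Function.Involutive σ) :
    ∃ V W : Set 𝔸, IsOpen V ∧ IsOpen W ∧ (1 : 𝔸) ∈ V ∧ (1 : 𝔸) ∈ W ∧
      ∀ x ∈ W, ∃! p : 𝔸 × 𝔸, p.2 ∈ V ∧ σ p.1 * p.1 = 1 ∧ σ p.2 = p.2 ∧ x = p.1 * p.2 := by
  have hσ1 := map_one_of_antiInvolution hmul hσ
  set V := (S).source ∩ σ ⁻¹' (S).source ∩ {a | IsUnit a}
  have hV : IsOpen V :=
    ((S).open_source.inter ((S).open_source.preimage hσc)).inter Units.isOpen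
  have hV1 : (1 : 𝔸) ∈ V := by
    refine ⟨⟨one_mem_mulSelfOpenPartialHomeomorph_source, ?_⟩, isUnit_one⟩
    simpa only [Set.mem_preimage, hσ1] using one_mem_mulSelfOpenPartialHomeomorph_source
  -- the candidate for `p.2` is the square root of `σ x * x`
  refine ⟨V, (fun x => σ x * x) ⁻¹' ((S).target ∩ (S).symm ⁻¹' V), hV,
    ((S).isOpen_inter_preimage_symm hV).preimage (hσc.mul continuous_id), hV1, ?_, ?_⟩
  · show σ 1 * 1 ∈ (S).target ∩ (S).symm ⁻¹' V
    rw [hσ1, one_mul]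
    exact ⟨one_mem_mulSelfOpenPartialHomeomorph_target, by
      rwa [Set.mem_preimage, mulSelfOpenPartialHomeomorph_symm_one]⟩
  rintro x ⟨hxT, ⟨⟨haS, hσaS⟩, ha⟩⟩
  set a := (S).symm (σ x * x)
  have haa : a * a = σ x * x := (S).right_inv hxT
  have hσa : σ a = a := by
    refine eq_of_mul_self_eq_of_mem_source hσaS haS ?_
    rw [← hmul, haa, hmul, hσ]
  refine ⟨(x * ↑ha.unit⁻¹, a), ⟨⟨⟨haS, hσaS⟩, ha⟩,
    antiInvolution_mul_self_mul_inv hmul hσ hσa haa.symm, hσa,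
    by rw [mul_assoc, ha.val_inv_mul, mul_one]⟩, ?_⟩
  rintro ⟨g, b⟩ ⟨⟨⟨hbS, -⟩, -⟩, hg, hb, hx⟩
  have hba : b = a := eq_of_mul_self_eq_of_mem_source hbS haS
    (by rw [haa, hx, antiInvolution_mul_self_of_mul hmul hg hb])
  subst hba
  rw [hx, mul_assoc, ha.mul_val_inv, mul_one]

end LocalSquareRoot

section FormAdjoint

variable {m R : Type*} [Fintype m] [CommRing R]

def formAdjoint (J X : Matrix m m R) : Matrix m m R := J * Xᵀ * J

theorem continuous_formAdjoint [TopologicalSpace R] [IsTopologicalRing R] (J : Matrix m m R) :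
    Continuous (formAdjoint J) :=
  (continuous_const.matrix_mul continuous_id.matrix_transpose).matrix_mul continuous_const

variable [DecidableEq m] {J : Matrix m m R}

theorem formAdjoint_mul (hJ : J * J = 1) (X Y : Matrix m m R) :
    formAdjoint J (X * Y) = formAdjoint J Y * formAdjoint J X := by
  simp only [formAdjoint, transpose_mul, mul_assoc, ← mul_assoc J J, hJ, one_mul]

theorem formAdjoint_involutive (hJ : J * J = 1) (hJt : Jᵀ = J) :
    Function.Involutive (formAdjoint J) := fun X => by
  simp only [formAdjoint, transpose_mul, transpose_transpose, hJt, mul_assoc, hJ, mul_one,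
    ← mul_assoc J J, one_mul]

theorem transpose_mul_mul_eq_iff_formAdjoint_mul_eq_one (hJ : J * J = 1) (g : Matrix m m R) :
    gᵀ * J * g = J ↔ formAdjoint J g * g = 1 := by
  rw [formAdjoint]
  refine ⟨fun h => by rw [mul_assoc J, mul_assoc J, h, hJ], fun h => ?_⟩
  calc gᵀ * J * g = J * (J * gᵀ * J * g) := by simp only [← mul_assoc, hJ, one_mul]
    _ = J := by rw [h, mul_one]

theorem mul_transpose_eq_mul_iff_formAdjoint_eq (hJ : J * J = 1) (a : Matrix m m R) :
    J * aᵀ = a * J ↔ formAdjoint J a = a := by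
  rw [formAdjoint]
  refine ⟨fun h => by rw [h, mul_assoc, hJ, mul_one], fun h => ?_⟩
  calc J * aᵀ = J * aᵀ * J * J := by rw [mul_assoc _ J J, hJ, mul_one]
    _ = a * J := by rw [h]

end FormAdjoint

theorem eta_mul_eta (n : ℕ) : eta n * eta n = 1 := by
  rw [eta, diagonal_mul_diagonal, ← diagonal_one]
  congr 1 with i
  split_ifs <;> norm_num

theorem eta_transpose (n : ℕ) : (eta n)ᵀ = eta n := diagonal_transpose _

theorem local_lorentz_pseudosymmetric_decomposition_general (n : ℕ) :
    ∃ U V W : Set (Matrix (Fin n) (Fin n) ℝ),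
      IsOpen U ∧ IsOpen V ∧ IsOpen W ∧
      (1 : Matrix (Fin n) (Fin n) ℝ) ∈ U ∧
      (1 : Matrix (Fin n) (Fin n) ℝ) ∈ V ∧
      (1 : Matrix (Fin n) (Fin n) ℝ) ∈ W ∧
      ∀ L ∈ W, ∃! p : Matrix (Fin n) (Fin n) ℝ × Matrix (Fin n) (Fin n) ℝ,
        p.1 ∈ U ∧ p.2 ∈ V ∧
        p.1ᵀ * eta n * p.1 = eta n ∧
        eta n * p.2ᵀ = p.2 * eta n ∧
        L = p.1 * p.2 := by
  -- any norm would do; this one induces the product topology on matrices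
  let _ := Matrix.linftyOpNormedRing (n := Fin n) (α := ℝ)
  let _ := Matrix.linftyOpNormedAlgebra (n := Fin n) (R := ℝ) (α := ℝ)
  obtain ⟨V, W, hV, hW, hV1, hW1, hdecomp⟩ :=
    exists_isOpen_unique_antiInvolution_decomposition (continuous_formAdjoint (eta n))
      (formAdjoint_mul (eta_mul_eta n)) (formAdjoint_involutive (eta_mul_eta n) (eta_transpose n))
  refine ⟨Set.univ, V, W, isOpen_univ, hV, hW, Set.mem_univ 1, hV1, hW1, fun L hL => ?_⟩
  simpa only [Set.mem_univ, true_and,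
    transpose_mul_mul_eq_iff_formAdjoint_mul_eq_one (eta_mul_eta n),
    mul_transpose_eq_mul_iff_formAdjoint_eq (eta_mul_eta n)] using hdecomp L hL

/-- Local decomposition `GL(n,ℝ) ≈ L₊↑ × {pseudosymmetric}` near the identity: there
are open neighborhoods `U, V, W` of the identity such that every `L ∈ W` is uniquely
`L = Λ * A` with `Λ ∈ U` Lorentz (`Λᵀ η Λ = η`) and `A ∈ V` pseudosymmetric
(`η Aᵀ = A η`). -/
theorem local_lorentz_pseudosymmetric_decomposition (n : ℕ) (hn : 1 ≤ n) :
    ∃ U V W : Set (Matrix (Fin n) (Fin n) ℝ),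
      IsOpen U ∧ IsOpen V ∧ IsOpen W ∧
      (1 : Matrix (Fin n) (Fin n) ℝ) ∈ U ∧
      (1 : Matrix (Fin n) (Fin n) ℝ) ∈ V ∧
      (1 : Matrix (Fin n) (Fin n) ℝ) ∈ W ∧
      ∀ L ∈ W, ∃! p : Matrix (Fin n) (Fin n) ℝ × Matrix (Fin n) (Fin n) ℝ,
        p.1 ∈ U ∧ p.2 ∈ V ∧
        p.1ᵀ * eta n * p.1 = eta n ∧
        eta n * p.2ᵀ = p.2 * eta n ∧
        L = p.1 * p.2 :=
  local_lorentz_pseudosymmetric_decomposition_general n
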